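/- Let J be a unital Jordan algebra and f ∈ J. The mutation J_f has a unit element if and only if f is invertible in J; in this case the unit of J_f is f⁻¹. -/
import Mathlib
set_option linter.unusedSectionVars false
set_option maxHeartbeats 1000000

/-- The quadratic representation `P(x) = 2 L(x)^2 - L(x^2)` of a Jordan algebra. -/
def quadRep {J : Type*} [NonUnitalNonAssocRing J] (x y : J) : J :=
  2 • (x * (x * y)) - (x * x) * y

/-- The mutation product `{x f y} = x(yf) + y(xf) - (xy)f` of a Jordan algebra. -/
def mutProd {J : Type*} [NonUnitalNonAssocRing J] (f x y : J) : J :=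
  x * (y * f) + y * (x * f) - (x * y) * f

section JordanAux

variable {F J : Type*} [Field F] [NonUnitalNonAssocRing J]
    [Module F J] [SMulCommClass F J J] [IsScalarTower F J J]

private lemma jhalf (h2 : (2 : F) ≠ 0) {a b : J} (h : a + a = b + b) : a = b := by
  have h' : (2:F) • a = (2:F) • b := by rw [two_smul, two_smul]; exact h
  calc a = ((2:F)⁻¹ * 2) • a := by rw [inv_mul_cancel₀ h2, one_smul]
  _ = (2:F)⁻¹ • ((2:F) • a) := by rw [mul_smul]
  _ = (2:F)⁻¹ • ((2:F) • b) := by rw [h']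
  _ = b := by rw [← mul_smul, inv_mul_cancel₀ h2, one_smul]

private lemma jlin1 (h2 : (2 : F) ≠ 0)
    (jordan : ∀ x y : J, (x * x) * (y * x) = ((x * x) * y) * x)
    (x z y : J) :
    (x*z)*(y*x) + (z*x)*(y*x) + (x*x)*(y*z)
      = ((x*z)*y)*x + ((z*x)*y)*x + ((x*x)*y)*z := by
  have hp := jordan (x+z) y
  have hm := jordan (x-z) y
  have hz := jordan z y
  simp only [mul_add, add_mul, mul_sub, sub_mul] at hp hm
  refine jhalf (F := F) h2 ?_
  linear_combination (norm := abel1) hp - hm - hz - hz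

private lemma jlin2 (h2 : (2 : F) ≠ 0)
    (jordan : ∀ x y : J, (x * x) * (y * x) = ((x * x) * y) * x)
    (x z w y : J) :
    (x*z)*(y*w) + (w*z)*(y*x) + (z*x)*(y*w) + (z*w)*(y*x) + (x*w)*(y*z) + (w*x)*(y*z)
      = ((x*z)*y)*w + ((w*z)*y)*x + ((z*x)*y)*w + ((z*w)*y)*x + ((x*w)*y)*z + ((w*x)*y)*z := by
  have h1 := jlin1 h2 jordan (x+w) z y
  have hx := jlin1 h2 jordan x z y
  have hw := jlin1 h2 jordan w z y
  simp only [mul_add, add_mul] at h1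
  linear_combination (norm := abel1) h1 - hx - hw

/-- The fully linearized Jordan identity. -/
private lemma jlin3 (h2 : (2 : F) ≠ 0)
    (comm : ∀ x y : J, x * y = y * x)
    (jordan : ∀ x y : J, (x * x) * (y * x) = ((x * x) * y) * x)
    (a b c y : J) :
    (a*b)*(y*c) + (c*b)*(y*a) + (a*c)*(y*b)
      = ((a*b)*y)*c + ((c*b)*y)*a + ((a*c)*y)*b := by
  have h := jlin2 h2 jordan a b c y
  rw [comm b a, comm b c, comm c a] at h
  refine jhalf (F := F) h2 ?_
  linear_combination (norm := abel1) h

/-- `L(f²)` commutes with `L(u)` when `f u = e`. -/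
private lemma opS6 (h2 : (2 : F) ≠ 0)
    (comm : ∀ x y : J, x * y = y * x)
    (jordan : ∀ x y : J, (x * x) * (y * x) = ((x * x) * y) * x)
    (e : J) (he : ∀ y : J, e * y = y) (f u : J) (hfu : f * u = e) (z : J) :
    (f*f)*(u*z) = u*((f*f)*z) := by
  have h := jlin3 h2 comm jordan f u f z
  rw [hfu, he, he] at h
  rw [comm u z, comm u ((f*f)*z)]
  linear_combination (norm := abel1) h

/-- `L(u)L(f²) = 2 L(f)L(u)L(f) - L(f)` when `f u = e`, `f² u = f`. -/
private lemma opR5 (h2 : (2 : F) ≠ 0)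
    (comm : ∀ x y : J, x * y = y * x)
    (jordan : ∀ x y : J, (x * x) * (y * x) = ((x * x) * y) * x)
    (e : J) (he : ∀ y : J, e * y = y) (f u : J)
    (hfu : f * u = e) (hffu : (f*f) * u = f) (z : J) :
    (f*f)*(u*z) + f*z = f*(u*(f*z)) + f*(u*(f*z)) := by
  have h := jlin3 h2 comm jordan f z f u
  rw [comm u f, hfu, hffu, comm (f*z) e, he, comm (f*z) u, comm (u*(f*z)) f] at h
  linear_combination (norm := abel1) h

/-- `L(u)L(f²) = L(f)²L(u) + L(u)L(f)² - L(f)` when `f u = e`. -/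
private lemma opR7 (h2 : (2 : F) ≠ 0)
    (comm : ∀ x y : J, x * y = y * x)
    (jordan : ∀ x y : J, (x * x) * (y * x) = ((x * x) * y) * x)
    (e : J) (he : ∀ y : J, e * y = y) (f u : J)
    (hfu : f * u = e) (z : J) :
    (f*f)*(u*z) + f*z = f*(f*(u*z)) + u*(f*(f*z)) := by
  have h := jlin3 h2 comm jordan f u z f
  rw [hfu, he, he, comm (f*z) e, he, comm z u, comm (u*z) (f*f), comm (u*z) f,
    comm (f*(u*z)) f, comm (f*z) f, comm (f*(f*z)) u] at h
  linear_combination (norm := abel1) h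

/-- The value of `L(u²)L(f²)` when `f u = e`, `f² u = f`. -/
private lemma opTS (h2 : (2 : F) ≠ 0)
    (comm : ∀ x y : J, x * y = y * x)
    (jordan : ∀ x y : J, (x * x) * (y * x) = ((x * x) * y) * x)
    (e : J) (he : ∀ y : J, e * y = y) (f u : J)
    (hfu : f * u = e) (hffu : (f*f) * u = f) (y : J) :
    (u*u)*((f*f)*y) + f*(u*y) + f*(u*y) = y + u*((f*f)*(u*y)) + u*((f*f)*(u*y)) := by
  have hE : (u*u)*(f*f) = e := by
    have h := opS6 h2 comm jordan e he f u hfu u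
    rw [hffu] at h
    rw [comm (u*u) (f*f), h, comm u f, hfu]
  have h := jlin3 h2 comm jordan u u y (f*f)
  rw [hffu, hE, he, comm y u, comm (u*y) f, comm (u*y) (f*f),
    comm ((f*f)*(u*y)) u] at h
  exact h

/-- If `u` is a Jordan inverse of `f` then `quadRep u` is a left inverse of `quadRep f`. -/
private lemma invCore (h2 : (2 : F) ≠ 0)
    (comm : ∀ x y : J, x * y = y * x)
    (jordan : ∀ x y : J, (x * x) * (y * x) = ((x * x) * y) * x)
    (e : J) (he : ∀ y : J, e * y = y) (f u : J)
    (hfu : f * u = e) (hffu : (f*f) * u = f) (huuf : (u*u) * f = u)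
    (hD : ∀ z : J, f * (u * z) = u * (f * z)) (y : J) :
    quadRep u (quadRep f y) = y := by
  have huf : u * f = e := (comm u f).trans hfu
  have e1 := opS6 h2 comm jordan e he f u hfu y
  have r5y := opR5 h2 comm jordan e he f u hfu hffu y
  have hd1 := hD (f*y)
  have hA : u * quadRep f y = f * y := by
    rw [quadRep, two_nsmul, mul_sub, mul_add]
    linear_combination (norm := abel1) -r5y + e1 - hd1 - hd1
  have r5s := opR5 h2 comm jordan e he u f huf huuf (f*y)
  have ts := opTS h2 comm jordan e he f u hfu hffu y
  have r5u := congrArg (fun t => u * t) r5y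
  simp only [mul_add] at r5u
  have hC : (u*u) * quadRep f y = f*(u*y) + f*(u*y) - y := by
    rw [quadRep, two_nsmul, mul_sub, mul_add]
    linear_combination (norm := abel1) r5s + r5s - ts - r5u - r5u
  have hd := hD y
  calc quadRep u (quadRep f y)
      = u * (u * quadRep f y) + u * (u * quadRep f y) - (u*u) * quadRep f y := by
        rw [quadRep, two_nsmul]
    _ = y := by
        rw [hA, hC]
        linear_combination (norm := abel1) -hd - hd

/-- If `P(f)` is injective and `P(f) u = f`, then `u` is a unit for the mutation `J_f`. -/
private lemma unitCore (h2 : (2 : F) ≠ 0)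
    (comm : ∀ x y : J, x * y = y * x)
    (jordan : ∀ x y : J, (x * x) * (y * x) = ((x * x) * y) * x)
    (e : J) (he : ∀ y : J, e * y = y) (f : J)
    (hinj : Function.Injective (quadRep f))
    (u : J) (hq : quadRep f u = f) (y : J) : mutProd f u y = y := by
  have hSA : ∀ w : J, (f*f)*(f*w) = f*((f*f)*w) := by
    intro w
    have hj := jordan f w
    rw [comm w f, comm ((f*f)*w) f] at hj
    exact hj
  have hPe : quadRep f e = f*f := by
    rw [quadRep, two_nsmul, comm (f*f) e, he]
    have hfe : f * e = f := (comm f e).trans (he f)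
    rw [hfe]
    abel
  have hPL : ∀ z : J, quadRep f (f*z) = f * quadRep f z := by
    intro z
    rw [quadRep, quadRep, two_nsmul, two_nsmul, mul_sub, mul_add, hSA z]
  have hfu : f * u = e := by
    apply hinj
    rw [hPL u, hq, hPe]
  have hffu : (f*f) * u = f := by
    have h := hq
    rw [quadRep, two_nsmul, hfu, comm f e, he] at h
    linear_combination (norm := abel1) -h
  have hD : ∀ z : J, f * (u * z) = u * (f * z) := by
    intro z
    apply hinj
    have r5a := opR5 h2 comm jordan e he f u hfu hffu z
    have r5b := opR5 h2 comm jordan e he f u hfu hffu (f*z)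
    have r7 := opR7 h2 comm jordan e he f u hfu z
    have R57 : f*(u*(f*z)) + f*(u*(f*z)) = f*(f*(u*z)) + u*(f*(f*z)) := by
      linear_combination (norm := abel1) r7 - r5a
    have c1 := congrArg (fun t => f * t) r5a
    have c2 := congrArg (fun t => f * t) R57
    simp only [mul_add] at c1 c2
    have hsa := hSA (u*z)
    rw [quadRep, quadRep, two_nsmul, two_nsmul]
    linear_combination (norm := abel1) -c1 - c2 - c2 + r5b - hsa
  rw [mutProd, comm y f, comm u f, hfu, comm y e, he, comm (u*y) f]
  linear_combination (norm := abel1) -(hD y)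

end JordanAux

/-- The mutation `J_f` of a unital Jordan algebra has a unit element if and only
if `f` is invertible (i.e. `P(f)` is bijective); in this case the unit of `J_f`
is `f⁻¹` (the element `u` with `P(f) u = f`). -/
theorem mutation_unital_iff_invertible {F J : Type*} [Field F] [NonUnitalNonAssocRing J]
    [Module F J] [SMulCommClass F J J] [IsScalarTower F J J]
    (h2 : (2 : F) ≠ 0)
    (comm : ∀ x y : J, x * y = y * x)
    (jordan : ∀ x y : J, (x * x) * (y * x) = ((x * x) * y) * x)
    (e : J) (he : ∀ y : J, e * y = y)
    (f : J) :
    ((∃ u : J, ∀ y : J, mutProd f u y = y) ↔ Function.Bijective (quadRep f)) ∧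
    (Function.Bijective (quadRep f) →
      ∀ u : J, quadRep f u = f → ∀ y : J, mutProd f u y = y) := by
  constructor
  · constructor
    · rintro ⟨u, hu⟩
      have hue : u * e = u := (comm u e).trans (he u)
      have hfe : f * e = f := (comm f e).trans (he f)
      have hfu : u * f = e := by
        have h := hu e
        rw [mutProd, he, he, hue] at h
        linear_combination (norm := abel1) h
      have hfu' : f * u = e := (comm f u).trans hfu
      have hD : ∀ z : J, f * (u * z) = u * (f * z) := by
        intro z
        have h := hu z
        rw [mutProd, hfu, comm z e, he, comm z f, comm (u*z) f] at h
        linear_combination (norm := abel1) -h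
      have hffu : (f*f) * u = f := by
        have h := hu f
        rw [mutProd, hfu, comm f e, he, comm u (f*f)] at h
        linear_combination (norm := abel1) h
      have hkey : ∀ z : J, ((u*u)*f)*z = u*z := by
        intro z
        have r6 := jlin3 h2 comm jordan u z u f
        rw [hfu', comm (u*z) e, he, comm (u*z) f, comm (f*(u*z)) u] at r6
        have r7 := jlin3 h2 comm jordan u f z u
        rw [hfu, he, he, comm (u*z) e, he, comm z f, comm (f*z) (u*u), comm (f*z) u,
          comm (u*(f*z)) u, comm (u*z) u, comm (u*(u*z)) f] at r7
        have hd1 : u * (f * (u * z)) = u * (u * (f * z)) := congrArg (fun t => u * t) (hD z)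
        have hd2 : f * (u * (u * z)) = u * (u * (f * z)) := (hD (u*z)).trans hd1
        linear_combination (norm := abel1) -r6 + r7 - hd1 - hd1 + hd2
      have huuf : (u*u) * f = u := by
        have h := hkey e
        rw [comm ((u*u)*f) e, he, hue] at h
        exact h
      exact Function.bijective_iff_has_inverse.mpr
        ⟨quadRep u,
          fun y => invCore h2 comm jordan e he f u hfu' hffu huuf hD y,
          fun y => invCore h2 comm jordan e he u f hfu huuf hffu (fun z => (hD z).symm) y⟩
    · intro hbij
      obtain ⟨u, hq⟩ := hbij.surjective f
      exact ⟨u, unitCore h2 comm jordan e he f hbij.injective u hq⟩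
  · intro hbij u hq
    exact unitCore h2 comm jordan e he f hbij.injective u hq
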